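/- arXiv:2605.13771 — 2 statements merged into one kernel-verified Lean document; each statement's English description precedes it below -/
import Mathlib

section
/- For integers 0 ≤ s ≤ t, max over 0 ≤ r ≤ s of the ratio H_{s,r}/H_{t,r} is at most 2^{2s+1}, where H_{m,r} = (1/(2r+1)) ∏_{j=0}^{r-1} (m+j+2)/(m-j). -/
/-
The product in `H_{m,r}` is a quotient of binomial coefficients: its numerator is the rising
factorial `(m+2)^(r) = r! C(m+r+1, r)` and its denominator the falling factorial
`m_(r) = r! C(m, r)`, so `(2r+1) H_{m,r} = C(m+r+1, r) / C(m, r)`. For `r ≤ s ≤ t` this quotient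
is at least `1` at `m = t`, and at `m = s` it is at most `C(s+r+1, r) ≤ 2^(s+r+1) ≤ 2^(2s+1)`.
-/

noncomputable def hahnH (m r : ℕ) : ℝ :=
  (1 / (2 * (r : ℝ) + 1)) * ∏ j ∈ Finset.range r, ((m : ℝ) + j + 2) / ((m : ℝ) - j)

open Finset Nat

lemma prod_range_add_two_div_sub_eq_choose_div_choose {m r : ℕ} (hr : r ≤ m) :
    ∏ j ∈ range r, ((m : ℝ) + j + 2) / ((m : ℝ) - j) =
      ((m + r + 1).choose r / m.choose r : ℝ) := by
  have hnum : ∏ j ∈ range r, ((m : ℝ) + j + 2) = r ! * (m + r + 1).choose r := by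
    rw [show m + r + 1 = (m + 1) + r by omega, ← Nat.cast_mul,
      ← ascFactorial_eq_factorial_mul_choose, ascFactorial_eq_prod_range]
    push_cast
    exact prod_congr rfl fun j _ => by ring
  have hden : ∏ j ∈ range r, ((m : ℝ) - j) = r ! * m.choose r := by
    rw [← Nat.cast_mul, ← descFactorial_eq_factorial_mul_choose, descFactorial_eq_prod_range]
    push_cast
    exact prod_congr rfl fun j hj => by
      rw [Nat.cast_sub (by linarith [mem_range.mp hj])]
  rw [prod_div_distrib, hnum, hden, mul_div_mul_left _ _ (by positivity)]

lemma hahnH_eq_choose_div_choose {m r : ℕ} (hr : r ≤ m) :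
    hahnH m r = ((m + r + 1).choose r / m.choose r : ℝ) / (2 * r + 1) := by
  rw [hahnH, prod_range_add_two_div_sub_eq_choose_div_choose hr, one_div_mul_eq_div]

lemma one_le_choose_div_choose_of_le {n N r : ℕ} (hr : r ≤ n) (hn : n ≤ N) :
    1 ≤ (N.choose r / n.choose r : ℝ) := by
  rw [one_le_div (by exact_mod_cast choose_pos hr)]
  exact_mod_cast choose_le_choose r hn

/-- For `0 ≤ s ≤ t`, the ratio `H_{s,r}/H_{t,r}` is at most `2^{2s+1}` for every `r ≤ s`. -/
theorem hahn_norm_ratio_bound (s t : ℕ) (hst : s ≤ t) :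
    ∀ r ≤ s, hahnH s r / hahnH t r ≤ 2 ^ (2 * s + 1) := by
  intro r hr
  have hrt : r ≤ t := hr.trans hst
  rw [hahnH_eq_choose_div_choose hr, hahnH_eq_choose_div_choose hrt,
    div_div_div_cancel_right₀ (by positivity)]
  calc ((s + r + 1).choose r / s.choose r : ℝ) / ((t + r + 1).choose r / t.choose r)
      ≤ (s + r + 1).choose r / s.choose r :=
        div_le_self (by positivity) (one_le_choose_div_choose_of_le hrt (by omega))
    _ ≤ (s + r + 1).choose r :=
        div_le_self (by positivity) (by exact_mod_cast choose_pos hr)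
    _ ≤ 2 ^ (s + r + 1) := by exact_mod_cast choose_le_two_pow _ _
    _ ≤ 2 ^ (2 * s + 1) := pow_le_pow_right₀ (by norm_num) (by omega)
end

section
/- Let 0 ≤ t ≤ n and define the hypergeometric sampling operator (T_{n,t} f)(k) = Σ_{a=0}^{t} f(a) · C(k,a)C(n−k, t−a)/C(n,t) for f : {0,…,t} → ℝ. Then for every 0 ≤ r ≤ t and every k ∈ {0,…,n}, (T_{n,t} Q_r^{(t)})(k) = Q_r^{(n)}(k), where Q_r^{(m)}(x) = Σ_{ℓ=0}^{r} (−1)^ℓ C(r,ℓ) C(r+ℓ,ℓ) x^{\underline{ℓ}}/m^{\underline{ℓ}} is the Hahn polynomial. -/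
/-! The Hahn polynomial `Q_r^{(m)}` is a fixed linear combination of the normalised falling
factorials `x^{\underline ℓ} / m^{\underline ℓ}`, `ℓ ≤ r`, and `T_{n,t}` is linear, so it suffices
that `T_{n,t}` sends `a ↦ a^{\underline ℓ} / t^{\underline ℓ}` to
`k ↦ k^{\underline ℓ} / n^{\underline ℓ}`. This is the factorial-moment identity of the
hypergeometric distribution, which follows from `C(a,ℓ) C(k,a) = C(k,ℓ) C(k-ℓ,a-ℓ)` and
Vandermonde's identity. -/

/-- The Hahn polynomial `Q_r^{(m)}(x) = Σ_{ℓ≤r} (-1)^ℓ C(r,ℓ)C(r+ℓ,ℓ) x^{underline ℓ}/m^{underline ℓ}`. -/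
noncomputable def hahnQ (m r x : ℕ) : ℝ :=
  ∑ ℓ ∈ Finset.range (r + 1),
    (-1 : ℝ) ^ ℓ * (r.choose ℓ : ℝ) * ((r + ℓ).choose ℓ : ℝ) *
      (x.descFactorial ℓ : ℝ) / (m.descFactorial ℓ : ℝ)

/-- The hypergeometric sampling operator
`(T_{n,t} f)(k) = Σ_{a≤t} f(a) C(k,a)C(n-k,t-a)/C(n,t)`. -/
noncomputable def hyperT (n t : ℕ) (f : ℕ → ℝ) (k : ℕ) : ℝ :=
  ∑ a ∈ Finset.range (t + 1),
    f a * ((k.choose a : ℝ) * ((n - k).choose (t - a) : ℝ) / (n.choose t : ℝ))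

open Finset

namespace Nat

theorem sum_range_choose_mul_choose_mul_choose (k m t ℓ : ℕ) (hℓt : ℓ ≤ t) :
    ∑ a ∈ range (t + 1), a.choose ℓ * (k.choose a * m.choose (t - a))
      = k.choose ℓ * (k + m - ℓ).choose (t - ℓ) := by
  obtain ⟨s, rfl⟩ := Nat.exists_eq_add_of_le hℓt
  have hfactor : ∀ b, (ℓ + b).choose ℓ * (k.choose (ℓ + b) * m.choose (ℓ + s - (ℓ + b)))
      = k.choose ℓ * ((k - ℓ).choose b * m.choose (s - b)) := by
    intro b
    rw [Nat.add_sub_add_left, ← mul_assoc, mul_comm _ (k.choose _),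
      choose_mul (Nat.le_add_right ℓ b), Nat.add_sub_cancel_left, mul_assoc]
  rw [add_assoc, sum_range_add, sum_eq_zero fun a ha => by
      rw [choose_eq_zero_of_lt (mem_range.1 ha), zero_mul], zero_add]
  simp only [hfactor, ← mul_sum, Nat.add_sub_cancel_left]
  rcases le_or_gt ℓ k with hℓk | hkℓ
  · rw [← Finset.Nat.sum_antidiagonal_eq_sum_range_succ
        (fun i j => (k - ℓ).choose i * m.choose j), ← add_choose_eq, Nat.sub_add_comm hℓk]
  · rw [choose_eq_zero_of_lt hkℓ, zero_mul, zero_mul]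

theorem sum_range_descFactorial_mul_choose_mul_choose (k m t ℓ : ℕ) (hℓt : ℓ ≤ t) :
    ∑ a ∈ range (t + 1), a.descFactorial ℓ * (k.choose a * m.choose (t - a))
      = k.descFactorial ℓ * (k + m - ℓ).choose (t - ℓ) := by
  simp only [descFactorial_eq_factorial_mul_choose, mul_assoc, ← mul_sum,
    sum_range_choose_mul_choose_mul_choose k m t ℓ hℓt]

theorem choose_mul_descFactorial {n t ℓ : ℕ} (hℓt : ℓ ≤ t) :
    n.choose t * t.descFactorial ℓ = n.descFactorial ℓ * (n - ℓ).choose (t - ℓ) := by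
  simp only [descFactorial_eq_factorial_mul_choose]
  rw [mul_left_comm, choose_mul hℓt, mul_assoc]

end Nat

theorem hyperT_sum_mul {ι : Type*} (n t : ℕ) (s : Finset ι) (c : ι → ℝ) (g : ι → ℕ → ℝ)
    (k : ℕ) :
    hyperT n t (fun a => ∑ i ∈ s, c i * g i a) k = ∑ i ∈ s, c i * hyperT n t (g i) k := by
  simp only [hyperT, sum_mul, mul_sum, mul_assoc]
  exact sum_comm

theorem hyperT_descFactorial_div {n t ℓ k : ℕ} (hℓt : ℓ ≤ t) (htn : t ≤ n) (hk : k ≤ n) :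
    hyperT n t (fun a => (a.descFactorial ℓ : ℝ) / t.descFactorial ℓ) k
      = k.descFactorial ℓ / n.descFactorial ℓ := by
  have hmoment : ∑ a ∈ range (t + 1),
      (a.descFactorial ℓ : ℝ) * (k.choose a * (n - k).choose (t - a))
        = k.descFactorial ℓ * (n - ℓ).choose (t - ℓ) := by
    have h := Nat.sum_range_descFactorial_mul_choose_mul_choose k (n - k) t ℓ hℓt
    rw [Nat.add_sub_cancel' hk] at h
    exact_mod_cast h
  have hnorm : (n.choose t : ℝ) * t.descFactorial ℓ
      = n.descFactorial ℓ * (n - ℓ).choose (t - ℓ) := by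
    exact_mod_cast Nat.choose_mul_descFactorial hℓt
  have hpos : ((n - ℓ).choose (t - ℓ) : ℝ) ≠ 0 := by
    exact_mod_cast (Nat.choose_pos (by omega)).ne'
  calc hyperT n t (fun a => (a.descFactorial ℓ : ℝ) / t.descFactorial ℓ) k
      = (∑ a ∈ range (t + 1),
            (a.descFactorial ℓ : ℝ) * (k.choose a * (n - k).choose (t - a)))
          / (n.choose t * t.descFactorial ℓ) := by
        rw [hyperT, sum_div]
        exact sum_congr rfl fun a _ => by ring
    _ = k.descFactorial ℓ / n.descFactorial ℓ := by
        rw [hmoment, hnorm, mul_div_mul_right _ _ hpos]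

/-- Intertwining: `T_{n,t} Q_r^{(t)} = Q_r^{(n)}` on `{0,…,n}`. -/
theorem hyperT_hahn_intertwine (n t r : ℕ) (hrt : r ≤ t) (htn : t ≤ n) :
    ∀ k ≤ n, hyperT n t (fun a => hahnQ t r a) k = hahnQ n r k := by
  intro k hk
  simp only [hahnQ, mul_div_assoc, hyperT_sum_mul]
  refine sum_congr rfl fun ℓ hℓ => ?_
  rw [hyperT_descFactorial_div ((Nat.lt_succ_iff.mp (mem_range.mp hℓ)).trans hrt) htn hk]
end
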